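/- Let ρ be a density operator on ℂ^{d_O} ⊗ ℂ^{d_B}, and let σ_O, σ_B be density operators on ℂ^{d_O} and ℂ^{d_B} respectively. Let ρ_O and ρ_B denote the partial traces of ρ over the second and first tensor factors respectively. Then ‖ρ − ρ_O ⊗ ρ_B‖₁ ≤ 3·‖ρ − σ_O ⊗ σ_B‖₁. -/

import Mathlib

/-!
With `X = ρ - σ_O ⊗ σ_B` one has `ρ_O - σ_O = Tr_B X` and `ρ_B - σ_B = Tr_O X`, and
`ρ - ρ_O ⊗ ρ_B = X - σ_O ⊗ Tr_O X - Tr_B X ⊗ ρ_B`.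
Partial traces and tensoring with a density operator are positive trace-preserving maps, and such
maps do not increase the trace norm of a Hermitian matrix: write it as `P - N` with `P, N ≥ 0` and
`‖X‖₁ = tr P + tr N` (its positive and negative parts), and use `‖P' - N'‖₁ ≤ tr P' + tr N'` for
all `P', N' ≥ 0`. The triangle inequality then bounds each of the three terms by `‖X‖₁`.
-/

open Matrix
open scoped Kronecker ComplexOrder

/-- The positive semidefinite square root of a positive semidefinite matrix
(the definition of `Matrix.PosSemidef.sqrt` in the older Mathlib). -/
noncomputable def posSemidefSqrt {n : Type*} [Fintype n] [DecidableEq n] {A : Matrix n n ℂ}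
    (hA : A.PosSemidef) : Matrix n n ℂ :=
  hA.1.eigenvectorUnitary.1 * diagonal ((↑) ∘ (√·) ∘ hA.1.eigenvalues) *
  (star hA.1.eigenvectorUnitary : Matrix n n ℂ)

/-- The trace norm `‖A‖₁ = Tr √(AᴴA)` of a complex square matrix. -/
noncomputable def traceNorm {n : Type*} [Fintype n] [DecidableEq n] (A : Matrix n n ℂ) : ℝ :=
  (posSemidefSqrt (Matrix.posSemidef_conjTranspose_mul_self A)).trace.re

/-- A density operator: positive semidefinite with unit trace. -/
def IsDensity {n : Type*} [Fintype n] (ρ : Matrix n n ℂ) : Prop :=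
  ρ.PosSemidef ∧ ρ.trace = 1

/-- Partial trace over the second tensor factor. -/
noncomputable def ptraceSnd {a b : Type*} [Fintype b] (ρ : Matrix (a × b) (a × b) ℂ) :
    Matrix a a ℂ :=
  Matrix.of fun i i' => ∑ x, ρ (i, x) (i', x)

/-- Partial trace over the first tensor factor. -/
noncomputable def ptraceFst {a b : Type*} [Fintype a] (ρ : Matrix (a × b) (a × b) ℂ) :
    Matrix b b ℂ :=
  Matrix.of fun j j' => ∑ x, ρ (x, j) (x, j')

open scoped MatrixOrder

namespace Matrix

section TraceNorm

variable {n : Type*} [Fintype n]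

lemma PosSemidef.sum_mul_re_diag_le_re_trace {M : Matrix n n ℂ} (hM : M.PosSemidef)
    {s : n → ℝ} (hs : ∀ i, |s i| ≤ 1) : ∑ i, s i * (M i i).re ≤ M.trace.re := by
  rw [trace, Complex.re_sum]
  refine Finset.sum_le_sum fun i _ => ?_
  change _ ≤ (M i i).re
  have hMii : 0 ≤ (M i i).re := (Complex.nonneg_iff.mp hM.diag_nonneg).1
  nlinarith [abs_le.mp (hs i)]

variable [DecidableEq n]

lemma trace_unitary_mul_mul_star (U : unitaryGroup n ℂ) (M : Matrix n n ℂ) :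
    ((U : Matrix n n ℂ) * M * star (U : Matrix n n ℂ)).trace = M.trace := by
  rw [trace_mul_comm, ← Matrix.mul_assoc, Unitary.star_mul_self_of_mem U.2, Matrix.one_mul]

lemma trace_star_mul_mul_unitary (U : unitaryGroup n ℂ) (M : Matrix n n ℂ) :
    (star (U : Matrix n n ℂ) * M * U).trace = M.trace := by
  rw [trace_mul_comm, ← Matrix.mul_assoc, Unitary.mul_star_self_of_mem U.2, Matrix.one_mul]

lemma posSemidefSqrt_eq_sqrt {A : Matrix n n ℂ} (hA : A.PosSemidef) :
    posSemidefSqrt hA = CFC.sqrt A := by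
  rw [CFC.sqrt_eq_real_sqrt A hA.nonneg, cfcₙ_eq_cfc, hA.1.cfc_eq]
  simp [IsHermitian.cfc, posSemidefSqrt, Unitary.conjStarAlgAut_apply, Function.comp_def]

lemma traceNorm_eq_re_trace_abs (A : Matrix n n ℂ) : traceNorm A = (CFC.abs A).trace.re := by
  rw [traceNorm, posSemidefSqrt_eq_sqrt, CFC.abs, star_eq_conjTranspose]

lemma IsHermitian.traceNorm_eq_sum_abs_eigenvalues {A : Matrix n n ℂ} (hA : A.IsHermitian) :
    traceNorm A = ∑ i, |hA.eigenvalues i| := by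
  rw [traceNorm_eq_re_trace_abs, CFC.abs_eq_cfc_norm A hA.isSelfAdjoint, hA.cfc_eq,
    IsHermitian.cfc, Unitary.conjStarAlgAut_apply, trace_unitary_mul_mul_star]
  simp [trace_diagonal]

lemma IsHermitian.star_eigenvectorUnitary_mul_mul {A : Matrix n n ℂ} (hA : A.IsHermitian) :
    star (hA.eigenvectorUnitary : Matrix n n ℂ) * A * hA.eigenvectorUnitary =
      diagonal fun i => (hA.eigenvalues i : ℂ) := by
  have hspec := hA.spectral_theorem
  rw [Unitary.conjStarAlgAut_apply] at hspec
  generalize hA.eigenvectorUnitary = U, hA.eigenvalues = d at hspec ⊢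
  subst hspec
  simp [← Matrix.mul_assoc, Matrix.mul_assoc _ (star _), Function.comp_def]

/-- Pairing `P - N` with the sign of its eigenvalues in its eigenbasis gives its trace norm,
while the diagonals of `P` and `N` in that basis are nonnegative and sum to their traces. -/
lemma PosSemidef.traceNorm_sub_le {P N : Matrix n n ℂ} (hP : P.PosSemidef)
    (hN : N.PosSemidef) : traceNorm (P - N) ≤ P.trace.re + N.trace.re := by
  have hX : (P - N).IsHermitian := hP.1.sub hN.1
  set U : Matrix n n ℂ := (hX.eigenvectorUnitary : Matrix n n ℂ)
  set d := hX.eigenvalues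
  set s : n → ℝ := fun i => if 0 ≤ d i then 1 else -1
  have hs : ∀ i, |s i| ≤ 1 := fun i => by by_cases h : 0 ≤ d i <;> simp [s, h]
  have hs' : ∀ i, |-s i| ≤ 1 := fun i => (abs_neg (s i)).trans_le (hs i)
  have hd : ∀ i, d i = ((star U * P * U) i i).re - ((star U * N * U) i i).re := fun i => by
    have := congrFun₂ hX.star_eigenvectorUnitary_mul_mul i i
    simp only [Matrix.mul_sub, Matrix.sub_mul, sub_apply, diagonal_apply_eq] at this
    rw [← Complex.sub_re, this, Complex.ofReal_re]
  have hUP : (star U * P * U).PosSemidef := hP.conjTranspose_mul_mul_same U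
  have hUN : (star U * N * U).PosSemidef := hN.conjTranspose_mul_mul_same U
  calc traceNorm (P - N) = ∑ i, s i * d i := by
        rw [hX.traceNorm_eq_sum_abs_eigenvalues]
        refine Finset.sum_congr rfl fun i _ => ?_
        change |d i| = s i * d i
        by_cases h : 0 ≤ d i
        · simp [s, h, abs_of_nonneg h]
        · simp [s, h, abs_of_neg (not_le.mp h)]
    _ = ∑ i, s i * ((star U * P * U) i i).re + ∑ i, -s i * ((star U * N * U) i i).re := by
        rw [← Finset.sum_add_distrib]
        exact Finset.sum_congr rfl fun i _ => by rw [hd]; ring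
    _ ≤ (star U * P * U).trace.re + (star U * N * U).trace.re :=
        add_le_add (hUP.sum_mul_re_diag_le_re_trace hs) (hUN.sum_mul_re_diag_le_re_trace hs')
    _ = P.trace.re + N.trace.re := by
        rw [trace_star_mul_mul_unitary, trace_star_mul_mul_unitary]

lemma IsHermitian.exists_posSemidef_sub_eq_traceNorm {X : Matrix n n ℂ} (hX : X.IsHermitian) :
    ∃ P N : Matrix n n ℂ, P.PosSemidef ∧ N.PosSemidef ∧ X = P - N ∧
      traceNorm X = P.trace.re + N.trace.re :=
  ⟨X⁺, X⁻, (CFC.posPart_nonneg X).posSemidef, (CFC.negPart_nonneg X).posSemidef,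
    (CFC.posPart_sub_negPart X hX.isSelfAdjoint).symm, by
      rw [traceNorm_eq_re_trace_abs, ← CFC.posPart_add_negPart X hX.isSelfAdjoint, trace_add,
        Complex.add_re]⟩

lemma traceNorm_sub_le {X Y : Matrix n n ℂ} (hX : X.IsHermitian) (hY : Y.IsHermitian) :
    traceNorm (X - Y) ≤ traceNorm X + traceNorm Y := by
  obtain ⟨P, N, hP, hN, rfl, hPN⟩ := hX.exists_posSemidef_sub_eq_traceNorm
  obtain ⟨P', N', hP', hN', rfl, hPN'⟩ := hY.exists_posSemidef_sub_eq_traceNorm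
  have hsplit : P - N - (P' - N') = (P + N') - (N + P') := by abel
  rw [hsplit, hPN, hPN']
  calc traceNorm (P + N' - (N + P')) ≤ (P + N').trace.re + (N + P').trace.re :=
        (hP.add hN').traceNorm_sub_le (hN.add hP')
    _ = _ := by simp only [trace_add, Complex.add_re]; ring

lemma traceNorm_map_le {m : Type*} [Fintype m] [DecidableEq m] (Φ : Matrix m m ℂ →+ Matrix n n ℂ)
    (hpos : ∀ P, P.PosSemidef → (Φ P).PosSemidef) (htr : ∀ P, (Φ P).trace = P.trace)
    {X : Matrix m m ℂ} (hX : X.IsHermitian) : traceNorm (Φ X) ≤ traceNorm X := by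
  obtain ⟨P, N, hP, hN, rfl, hPN⟩ := hX.exists_posSemidef_sub_eq_traceNorm
  rw [hPN, map_sub, ← htr P, ← htr N]
  exact (hpos P hP).traceNorm_sub_le (hpos N hN)

end TraceNorm

section PartialTrace

variable {a b : Type*}

lemma ptraceSnd_eq_sum_submatrix [Fintype b] (ρ : Matrix (a × b) (a × b) ℂ) :
    ptraceSnd ρ = ∑ y, ρ.submatrix (·, y) (·, y) := by
  ext i i'
  simp [ptraceSnd, sum_apply]

lemma ptraceFst_eq_sum_submatrix [Fintype a] (ρ : Matrix (a × b) (a × b) ℂ) :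
    ptraceFst ρ = ∑ x, ρ.submatrix (x, ·) (x, ·) := by
  ext j j'
  simp [ptraceFst, sum_apply]

lemma ptraceSnd_add [Fintype b] (ρ σ : Matrix (a × b) (a × b) ℂ) :
    ptraceSnd (ρ + σ) = ptraceSnd ρ + ptraceSnd σ := by
  ext i i'
  simp [ptraceSnd, Finset.sum_add_distrib]

lemma ptraceFst_add [Fintype a] (ρ σ : Matrix (a × b) (a × b) ℂ) :
    ptraceFst (ρ + σ) = ptraceFst ρ + ptraceFst σ := by
  ext j j'
  simp [ptraceFst, Finset.sum_add_distrib]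

lemma ptraceSnd_sub [Fintype b] (ρ σ : Matrix (a × b) (a × b) ℂ) :
    ptraceSnd (ρ - σ) = ptraceSnd ρ - ptraceSnd σ := by
  ext i i'
  simp [ptraceSnd, Finset.sum_sub_distrib]

lemma ptraceFst_sub [Fintype a] (ρ σ : Matrix (a × b) (a × b) ℂ) :
    ptraceFst (ρ - σ) = ptraceFst ρ - ptraceFst σ := by
  ext j j'
  simp [ptraceFst, Finset.sum_sub_distrib]

lemma trace_ptraceSnd [Fintype a] [Fintype b] (ρ : Matrix (a × b) (a × b) ℂ) :
    (ptraceSnd ρ).trace = ρ.trace := by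
  simp [ptraceSnd, trace, Fintype.sum_prod_type]

lemma trace_ptraceFst [Fintype a] [Fintype b] (ρ : Matrix (a × b) (a × b) ℂ) :
    (ptraceFst ρ).trace = ρ.trace := by
  simp [ptraceFst, trace, Fintype.sum_prod_type_right]

lemma PosSemidef.ptraceSnd [Fintype b] {ρ : Matrix (a × b) (a × b) ℂ} (hρ : ρ.PosSemidef) :
    (ptraceSnd ρ).PosSemidef := by
  rw [ptraceSnd_eq_sum_submatrix]
  exact posSemidef_sum _ fun y _ => hρ.submatrix _

lemma PosSemidef.ptraceFst [Fintype a] {ρ : Matrix (a × b) (a × b) ℂ} (hρ : ρ.PosSemidef) :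
    (ptraceFst ρ).PosSemidef := by
  rw [ptraceFst_eq_sum_submatrix]
  exact posSemidef_sum _ fun x _ => hρ.submatrix _

lemma IsHermitian.ptraceSnd [Fintype b] {ρ : Matrix (a × b) (a × b) ℂ} (hρ : ρ.IsHermitian) :
    (ptraceSnd ρ).IsHermitian := by
  rw [ptraceSnd_eq_sum_submatrix]
  exact isSelfAdjoint_sum _ fun y _ => hρ.submatrix _

lemma IsHermitian.ptraceFst [Fintype a] {ρ : Matrix (a × b) (a × b) ℂ} (hρ : ρ.IsHermitian) :
    (ptraceFst ρ).IsHermitian := by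
  rw [ptraceFst_eq_sum_submatrix]
  exact isSelfAdjoint_sum _ fun x _ => hρ.submatrix _

lemma ptraceSnd_kronecker [Fintype b] (A : Matrix a a ℂ) (B : Matrix b b ℂ) :
    ptraceSnd (A ⊗ₖ B) = B.trace • A := by
  ext i i'
  simp [ptraceSnd, trace, mul_comm, Finset.mul_sum]

lemma ptraceFst_kronecker [Fintype a] (A : Matrix a a ℂ) (B : Matrix b b ℂ) :
    ptraceFst (A ⊗ₖ B) = A.trace • B := by
  ext j j'
  simp [ptraceFst, trace, Finset.sum_mul]

variable [Fintype a] [Fintype b] [DecidableEq a] [DecidableEq b]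

lemma traceNorm_ptraceSnd_le {X : Matrix (a × b) (a × b) ℂ} (hX : X.IsHermitian) :
    traceNorm (ptraceSnd X) ≤ traceNorm X :=
  traceNorm_map_le (AddMonoidHom.mk' ptraceSnd ptraceSnd_add) (fun _ hP => hP.ptraceSnd)
    trace_ptraceSnd hX

lemma traceNorm_ptraceFst_le {X : Matrix (a × b) (a × b) ℂ} (hX : X.IsHermitian) :
    traceNorm (ptraceFst X) ≤ traceNorm X :=
  traceNorm_map_le (AddMonoidHom.mk' ptraceFst ptraceFst_add) (fun _ hP => hP.ptraceFst)
    trace_ptraceFst hX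

end PartialTrace

section Kronecker

variable {a b : Type*}

lemma IsHermitian.kronecker {A : Matrix a a ℂ} {B : Matrix b b ℂ} (hA : A.IsHermitian)
    (hB : B.IsHermitian) : (A ⊗ₖ B).IsHermitian := by
  rw [IsHermitian, conjTranspose_kronecker, hA.eq, hB.eq]

variable [Fintype a] [Fintype b] [DecidableEq a] [DecidableEq b]

lemma traceNorm_density_kronecker_le {σ : Matrix a a ℂ} (hσ : IsDensity σ) {A : Matrix b b ℂ}
    (hA : A.IsHermitian) : traceNorm (σ ⊗ₖ A) ≤ traceNorm A :=
  traceNorm_map_le (AddMonoidHom.mk' (σ ⊗ₖ ·) (kronecker_add σ)) (fun _ hP => hσ.1.kronecker hP)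
    (fun P => by simp [trace_kronecker, hσ.2]) hA

lemma traceNorm_kronecker_density_le {σ : Matrix b b ℂ} (hσ : IsDensity σ) {A : Matrix a a ℂ}
    (hA : A.IsHermitian) : traceNorm (A ⊗ₖ σ) ≤ traceNorm A :=
  traceNorm_map_le (AddMonoidHom.mk' (· ⊗ₖ σ) (add_kronecker · · σ))
    (fun _ hP => hP.kronecker hσ.1) (fun P => by simp [trace_kronecker, hσ.2]) hA

end Kronecker

end Matrix

theorem close_to_product_implies_close_to_marginals
    (dO dB : ℕ) (ρ : Matrix (Fin dO × Fin dB) (Fin dO × Fin dB) ℂ)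
    (σO : Matrix (Fin dO) (Fin dO) ℂ) (σB : Matrix (Fin dB) (Fin dB) ℂ)
    (hρ : IsDensity ρ) (hσO : IsDensity σO) (hσB : IsDensity σB) :
    traceNorm (ρ - (ptraceSnd ρ) ⊗ₖ (ptraceFst ρ)) ≤ 3 * traceNorm (ρ - σO ⊗ₖ σB) := by
  set X := ρ - σO ⊗ₖ σB
  have hX : X.IsHermitian := hρ.1.1.sub (hσO.1.1.kronecker hσB.1.1)
  have hρB : IsDensity (ptraceFst ρ) := ⟨hρ.1.ptraceFst, (trace_ptraceFst ρ).trans hρ.2⟩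
  have hXO : ptraceSnd X = ptraceSnd ρ - σO := by
    rw [ptraceSnd_sub, ptraceSnd_kronecker, hσB.2, one_smul]
  have hXB : ptraceFst X = ptraceFst ρ - σB := by
    rw [ptraceFst_sub, ptraceFst_kronecker, hσO.2, one_smul]
  have hL : (σO ⊗ₖ ptraceFst X).IsHermitian := hσO.1.1.kronecker hX.ptraceFst
  have hR : (ptraceSnd X ⊗ₖ ptraceFst ρ).IsHermitian := hX.ptraceSnd.kronecker hρB.1.1
  calc traceNorm (ρ - ptraceSnd ρ ⊗ₖ ptraceFst ρ)
      = traceNorm (X - σO ⊗ₖ ptraceFst X - ptraceSnd X ⊗ₖ ptraceFst ρ) := by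
        rw [hXO, hXB]
        congr 1
        ext ⟨i, j⟩ ⟨i', j'⟩
        simp only [X, Matrix.sub_apply, kroneckerMap_apply]
        ring
    _ ≤ traceNorm X + traceNorm (σO ⊗ₖ ptraceFst X) + traceNorm (ptraceSnd X ⊗ₖ ptraceFst ρ) :=
        (traceNorm_sub_le (hX.sub hL) hR).trans (by gcongr; exact traceNorm_sub_le hX hL)
    _ ≤ traceNorm X + traceNorm X + traceNorm X := by
        gcongr
        · exact (traceNorm_density_kronecker_le hσO hX.ptraceFst).trans (traceNorm_ptraceFst_le hX)
        · exact (traceNorm_kronecker_density_le hρB hX.ptraceSnd).trans (traceNorm_ptraceSnd_le hX)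
    _ = 3 * traceNorm X := by ring
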